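/- (Erdős) Every additive basis of finite order is an essential component: if B is a set of nonnegative integers that is an additive basis of order h for some positive integer h, then for every set A of nonnegative integers with 0 < σ(A) < 1, one has σ(A+B) > σ(A). -/
import Mathlib


open Pointwise Filter

/-- The counting function of a set of nonnegative integers: the number of
positive elements of `A` that are at most `n`. -/
noncomputable def countingFn (A : Set ℕ) (n : ℕ) : ℕ := (A ∩ Set.Icc 1 n).ncard

/-- The Shnirel'man density `σ(A) = inf_{n ≥ 1} A(n)/n`. -/
noncomputable def shnirelmanDensity (A : Set ℕ) : ℝ :=
  ⨅ n : {n : ℕ // 0 < n}, (countingFn A (n : ℕ) : ℝ) / ((n : ℕ) : ℝ)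

/-- The lower asymptotic density `d_L(A) = liminf_{n → ∞} A(n)/n`. -/
noncomputable def lowerDensity (A : Set ℕ) : ℝ :=
  liminf (fun n : ℕ => (countingFn A n : ℝ) / (n : ℝ)) atTop

/-- `A` is an additive basis of order `h`: every nonnegative integer is the
sum of exactly `h` elements of `A` (with repetitions allowed). -/
def IsBasisOfOrder (A : Set ℕ) (h : ℕ) : Prop :=
  ∀ n : ℕ, ∃ c : Fin h → ℕ, (∀ i, c i ∈ A) ∧ ∑ i, c i = n

/-- `A` is an asymptotic basis of order `h`: every sufficiently large integer
is the sum of exactly `h` elements of `A` (with repetitions allowed). -/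
def IsAsymptoticBasisOfOrder (A : Set ℕ) (h : ℕ) : Prop :=
  ∀ᶠ n : ℕ in atTop, ∃ c : Fin h → ℕ, (∀ i, c i ∈ A) ∧ ∑ i, c i = n

/-- A minimal asymptotic basis of order `h` is an asymptotic basis of order `h`
no proper subset of which is an asymptotic basis of order `h`. -/
def IsMinimalAsymptoticBasisOfOrder (A : Set ℕ) (h : ℕ) : Prop :=
  IsAsymptoticBasisOfOrder A h ∧
    ∀ B : Set ℕ, B ⊂ A → ¬ IsAsymptoticBasisOfOrder B h

/-- A maximal asymptotic nonbasis of order `h` is a set that is not an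
asymptotic basis of order `h`, but such that adjoining any element outside it
produces an asymptotic basis of order `h`. -/
def IsMaximalAsymptoticNonbasisOfOrder (A : Set ℕ) (h : ℕ) : Prop :=
  ¬ IsAsymptoticBasisOfOrder A h ∧
    ∀ b : ℕ, b ∉ A → IsAsymptoticBasisOfOrder (A ∪ {b}) h

lemma countingFn_eq (A : Set ℕ) [DecidablePred (· ∈ A)] (n : ℕ) :
    countingFn A n = ((Finset.Icc 1 n).filter (· ∈ A)).card := by
  have : A ∩ Set.Icc 1 n = ↑((Finset.Icc 1 n).filter (· ∈ A)) := by
    ext x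
    simp only [Set.mem_inter_iff, Set.mem_Icc, Finset.coe_filter, Finset.mem_Icc,
      Set.mem_setOf_eq]
    tauto
  rw [countingFn, this, Set.ncard_coe_finset]

lemma shnirelmanDensity_le_aux (A : Set ℕ) {n : ℕ} (hn : 0 < n) :
    shnirelmanDensity A * n ≤ (countingFn A n : ℝ) := by
  have h1 : shnirelmanDensity A ≤ (countingFn A n : ℝ) / n := by
    refine ciInf_le ⟨0, fun x hx => ?_⟩ (⟨n, hn⟩ : {n : ℕ // 0 < n})
    obtain ⟨m, rfl⟩ := hx; positivity
  have hn' : (0:ℝ) < n := by exact_mod_cast hn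
  calc shnirelmanDensity A * n ≤ ((countingFn A n : ℝ)/n) * n :=
        mul_le_mul_of_nonneg_right h1 (le_of_lt hn')
  _ = countingFn A n := by field_simp

lemma sum_ge_triangle : ∀ (S : Finset ℕ), (∀ m ∈ S, 1 ≤ m) →
    S.card * (S.card + 1) ≤ 2 * ∑ m ∈ S, m := by
  intro S
  induction S using Finset.strongInduction with
  | _ S ih =>
    intro hS
    rcases S.eq_empty_or_nonempty with rfl | hne
    · simp
    · set M := S.max' hne with hM
      have hMS : M ∈ S := S.max'_mem hne
      have hcard : S.card ≤ M := by
        have hsub : S ⊆ Finset.Icc 1 M :=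
          fun x hx => Finset.mem_Icc.2 ⟨hS x hx, Finset.le_max' S x hx⟩
        calc S.card ≤ (Finset.Icc 1 M).card := Finset.card_le_card hsub
        _ = M := by simp
      have ih' := ih (S.erase M) (Finset.erase_ssubset hMS)
        (fun m hm => hS m (Finset.mem_of_mem_erase hm))
      have hsum : ∑ m ∈ S, m = M + ∑ m ∈ S.erase M, m := (Finset.add_sum_erase _ _ hMS).symm
      have hc : (S.erase M).card = S.card - 1 := Finset.card_erase_of_mem hMS
      obtain ⟨k, hk⟩ : ∃ k, S.card = k + 1 :=
        ⟨S.card - 1, (Nat.succ_pred_eq_of_pos (Finset.card_pos.2 hne)).symm⟩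
      rw [hk] at hcard ⊢
      rw [hc, hk] at ih'
      simp only [Nat.add_sub_cancel] at ih'
      rw [hsum]
      nlinarith

lemma inner_count (A : Set ℕ) [DecidablePred (· ∈ A)] {n m : ℕ} (hmn : m ≤ n) :
    ((Finset.Icc 1 n).filter fun t => t < m ∧ m - t ∈ A).card
      = ((Finset.Icc 1 (m-1)).filter (· ∈ A)).card := by
  apply Finset.card_bij' (fun t _ => m - t) (fun a _ => m - a)
  · intro t ht
    simp only [Finset.mem_filter, Finset.mem_Icc] at ht ⊢
    exact ⟨⟨by omega, by omega⟩, ht.2.2⟩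
  · intro a ha
    simp only [Finset.mem_filter, Finset.mem_Icc] at ha ⊢
    refine ⟨⟨by omega, by omega⟩, by omega, ?_⟩
    have : m - (m - a) = a := by omega
    rw [this]; exact ha.2
  · intro t ht
    simp only [Finset.mem_filter, Finset.mem_Icc] at ht
    omega
  · intro a ha
    simp only [Finset.mem_filter, Finset.mem_Icc] at ha
    omega

lemma double_count (A : Set ℕ) [DecidablePred (· ∈ A)] (n : ℕ) :
    ∑ m ∈ (Finset.Icc 1 n).filter (· ∉ A), countingFn A (m-1) =
      ∑ t ∈ Finset.Icc 1 n, ((Finset.Icc 1 n).filter fun m => m ∉ A ∧ t < m ∧ m - t ∈ A).card := by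
  have step1 : ∀ t ∈ Finset.Icc 1 n,
      ((Finset.Icc 1 n).filter fun m => m ∉ A ∧ t < m ∧ m - t ∈ A).card
        = ∑ m ∈ Finset.Icc 1 n, if m ∉ A ∧ t < m ∧ m - t ∈ A then 1 else 0 := by
    intro t _; rw [Finset.card_filter]
  rw [Finset.sum_congr rfl step1, Finset.sum_comm]
  rw [Finset.sum_filter]
  apply Finset.sum_congr rfl
  intro m hm
  by_cases hA : m ∈ A
  · simp [hA]
  · rw [if_pos hA]
    have : ∀ t ∈ Finset.Icc 1 n, (if m ∉ A ∧ t < m ∧ m - t ∈ A then 1 else 0)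
        = if t < m ∧ m - t ∈ A then 1 else 0 := by
      intro t _; simp [hA]
    rw [Finset.sum_congr rfl this, ← Finset.card_filter,
      inner_count A (Finset.mem_Icc.1 hm).2, countingFn_eq]

lemma zero_mem_basis {B : Set ℕ} {h : ℕ} (hh : 0 < h) (hB : IsBasisOfOrder B h) : 0 ∈ B := by
  obtain ⟨c, hc1, hc2⟩ := hB 0
  have := Finset.sum_eq_zero_iff.1 hc2 ⟨0, hh⟩ (Finset.mem_univ _)
  rw [← this]; exact hc1 _

lemma gain (B : Set ℕ) (h : ℕ) (hh : 0 < h) (hB : IsBasisOfOrder B h)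
    (A : Set ℕ) [DecidablePred (· ∈ A)] [DecidablePred (· ∈ A + B)] (n t : ℕ) :
    ((Finset.Icc 1 n).filter fun m => m ∉ A ∧ t < m ∧ m - t ∈ A).card
      ≤ h * ((Finset.Icc 1 n).filter fun x => x ∈ A + B ∧ x ∉ A).card := by
  classical
  obtain ⟨c, hc1, hc2⟩ := hB t
  set d : ℕ → ℕ := fun i => if hi : i < h then c ⟨i, hi⟩ else 0 with hd_def
  have hdB : ∀ i, d i ∈ B := by
    intro i
    by_cases hi : i < h
    · simp only [hd_def, dif_pos hi]; exact hc1 _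
    · simp only [hd_def, dif_neg hi]; exact zero_mem_basis hh hB
  set p : ℕ → ℕ := fun j => ∑ i ∈ Finset.range j, d i with hp_def
  have hpt : p h = t := by
    rw [hp_def]
    simp only
    rw [← Fin.sum_univ_eq_sum_range]
    rw [← hc2]
    apply Finset.sum_congr rfl
    intro i _
    simp [hd_def, i.isLt]
  have hpmono : Monotone p := by
    intro i j hij
    exact Finset.sum_le_sum_of_subset (Finset.range_subset_range.2 hij)
  have hpsucc : ∀ j, p (j + 1) = p j + d j := fun j => Finset.sum_range_succ _ _
  -- the chain map
  set E : ℕ → Prop := fun m => m ∉ A ∧ t < m ∧ m - t ∈ A with hE_def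
  have hex : ∀ m, E m → ∃ j, (m - t) + p j ∉ A := by
    intro m hm
    refine ⟨h, ?_⟩
    rw [hpt]
    have : m - t + t = m := by omega
    rw [this]; exact hm.1
  set J : ℕ → ℕ := fun m => if hm : ∃ j, (m - t) + p j ∉ A then Nat.find hm else 0 with hJ_def
  set φ : ℕ → ℕ := fun m => (m - t) + p (J m) with hφ_def
  have hJ_eq : ∀ m (hm : ∃ j, (m - t) + p j ∉ A), J m = Nat.find hm := by
    intro m hm; simp only [hJ_def, dif_pos hm]
  have hJspec : ∀ m, E m → (m - t) + p (J m) ∉ A := by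
    intro m hm
    rw [hJ_eq m (hex m hm)]
    exact Nat.find_spec (hex m hm)
  have hJle : ∀ m, E m → J m ≤ h := by
    intro m hm
    rw [hJ_eq m (hex m hm)]
    apply Nat.find_le
    rw [hpt]
    have : m - t + t = m := by omega
    rw [this]; exact hm.1
  have hJpos : ∀ m, E m → 1 ≤ J m := by
    intro m hm
    by_contra hcon
    have h0 : J m = 0 := by omega
    have := hJspec m hm
    rw [h0] at this
    simp only [hp_def, Finset.range_zero, Finset.sum_empty, add_zero] at this
    exact this hm.2.2
  have hJprev : ∀ m, E m → (m - t) + p (J m - 1) ∈ A := by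
    intro m hm
    have h1 := hJpos m hm
    rw [hJ_eq m (hex m hm)] at h1 ⊢
    have := Nat.find_min (hex m hm) (show Nat.find (hex m hm) - 1 < Nat.find (hex m hm) by omega)
    exact not_not.1 this
  have hφAB : ∀ m, E m → φ m ∈ A + B := by
    intro m hm
    have h1 := hJpos m hm
    have : p (J m) = p (J m - 1) + d (J m - 1) := by
      conv_lhs => rw [show J m = (J m - 1) + 1 by omega]
      exact hpsucc _
    rw [hφ_def]
    simp only
    rw [this, ← add_assoc]
    exact Set.add_mem_add (hJprev m hm) (hdB _)
  -- apply the counting lemma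
  apply Finset.card_le_mul_card_image_of_maps_to (f := φ)
  · intro m hm
    simp only [Finset.mem_filter, Finset.mem_Icc] at hm
    obtain ⟨⟨hm1, hmn⟩, hmE⟩ := hm
    refine Finset.mem_filter.2 ⟨Finset.mem_Icc.2 ⟨?_, ?_⟩, hφAB m hmE, hJspec m hmE⟩
    · simp only [hφ_def]; omega
    · simp only [hφ_def]
      have : p (J m) ≤ t := by rw [← hpt]; exact hpmono (hJle m hmE)
      omega
  · intro x _
    have maps : ∀ m ∈ ((Finset.Icc 1 n).filter fun m => m ∉ A ∧ t < m ∧ m - t ∈ A).filter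
        (fun m => φ m = x), J m ∈ Finset.Icc 1 h := by
      intro m hm
      simp only [Finset.mem_filter] at hm
      exact Finset.mem_Icc.2 ⟨hJpos m hm.1.2, hJle m hm.1.2⟩
    have inj : Set.InjOn J (((Finset.Icc 1 n).filter fun m => m ∉ A ∧ t < m ∧ m - t ∈ A).filter
        (fun m => φ m = x)) := by
      intro m1 hm1 m2 hm2 hJ12
      simp only [Finset.coe_filter, Finset.mem_filter, Finset.mem_Icc, Set.mem_setOf_eq] at hm1 hm2
      have e1 : (m1 - t) + p (J m1) = x := hm1.2
      have e2 : (m2 - t) + p (J m2) = x := hm2.2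
      rw [hJ12] at e1
      have ht1 : t < m1 := hm1.1.2.2.1
      have ht2 : t < m2 := hm2.1.2.2.1
      omega
    calc (((Finset.Icc 1 n).filter fun m => m ∉ A ∧ t < m ∧ m - t ∈ A).filter
        (fun m => φ m = x)).card ≤ (Finset.Icc 1 h).card :=
          Finset.card_le_card_of_injOn J maps inj
    _ = h := by simp

lemma one_mem_of_pos_density {A : Set ℕ} (h0 : 0 < shnirelmanDensity A) : 1 ∈ A := by
  classical
  have h := shnirelmanDensity_le_aux A (n := 1) one_pos
  have h1 : (0:ℝ) < countingFn A 1 := by push_cast at h ⊢; nlinarith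
  have h2 : 0 < countingFn A 1 := by exact_mod_cast h1
  rw [countingFn_eq] at h2
  obtain ⟨x, hx⟩ := Finset.card_pos.1 h2
  simp only [Finset.mem_filter, Finset.mem_Icc] at hx
  have hx1 : x = 1 := by omega
  rw [← hx1]; exact hx.2

set_option maxHeartbeats 1000000 in
lemma main_bound (B : Set ℕ) (h : ℕ) (hh : 0 < h) (hB : IsBasisOfOrder B h)
    (A : Set ℕ) (h0 : 0 < shnirelmanDensity A) (h1 : shnirelmanDensity A < 1)
    {n : ℕ} (hn : 0 < n) :
    (shnirelmanDensity A + shnirelmanDensity A * (1 - shnirelmanDensity A)^2 / (16 * h)) * n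
      ≤ (countingFn (A + B) n : ℝ) := by
  classical
  set α := shnirelmanDensity A with hα
  set δ := α * (1 - α)^2 / (16 * (h:ℝ)) with hδ
  have hh' : (1:ℝ) ≤ h := by exact_mod_cast hh
  have hδpos : 0 < δ := by
    apply div_pos
    · exact mul_pos h0 (pow_pos (by linarith) 2)
    · nlinarith
  have hδle : δ ≤ (1 - α)/2 := by
    rw [hδ, div_le_div_iff₀ (by nlinarith) (by norm_num)]
    nlinarith [mul_nonneg (mul_nonneg h0.le (show (0:ℝ) ≤ 1 - α by linarith))
      (show (0:ℝ) ≤ 1 - α by linarith), sq_nonneg (1 - α)]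
  have h0B : (0:ℕ) ∈ B := zero_mem_basis hh hB
  have hsub : A ⊆ A + B := by
    intro a ha
    have := Set.add_mem_add ha h0B
    rwa [add_zero] at this
  have hcnt_mono : countingFn A n ≤ countingFn (A+B) n := by
    exact Set.ncard_le_ncard (Set.inter_subset_inter_left _ hsub)
      (Set.Finite.inter_of_right (Set.finite_Icc 1 n) _)
  by_cases hc : (α + δ) * n ≤ (countingFn A n : ℝ)
  · exact hc.trans (by exact_mod_cast hcnt_mono)
  push_neg at hc
  set S := (Finset.Icc 1 n).filter (· ∉ A) with hS
  set k := S.card with hk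
  have hkcard : countingFn A n + k = n := by
    rw [countingFn_eq, hk, hS]
    have := Finset.card_filter_add_card_filter_not (s := Finset.Icc 1 n)
      (p := (· ∈ A))
    simpa using this
  have h1A : 1 ∈ A := one_mem_of_pos_density h0
  have hn' : (0:ℝ) < n := by exact_mod_cast hn
  have hcntk : (countingFn A n : ℝ) + k = n := by exact_mod_cast hkcard
  have hk_lb : ((1 - α)/2) * n < (k:ℝ) := by nlinarith
  -- lower bound for the double-counted sum
  have hsum1 : ∀ m ∈ S, (α/2) * m ≤ (countingFn A (m-1) : ℝ) := by
    intro m hm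
    simp only [hS, Finset.mem_filter, Finset.mem_Icc] at hm
    have hm2 : 2 ≤ m := by
      rcases Nat.lt_or_ge m 2 with hlt | hge
      · exfalso; have : m = 1 := by omega
        exact hm.2 (this ▸ h1A)
      · exact hge
    have hle := shnirelmanDensity_le_aux A (n := m-1) (by omega)
    have hcast : ((m-1:ℕ):ℝ) = (m:ℝ) - 1 := by
      push_cast [Nat.cast_sub (by omega : 1 ≤ m)]; ring
    rw [hcast] at hle
    have hm2' : (2:ℝ) ≤ m := by exact_mod_cast hm2
    nlinarith [h0.le]
  have hsum2 : (α/2) * ∑ m ∈ S, (m:ℝ) ≤ ∑ m ∈ S, (countingFn A (m-1):ℝ) := by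
    rw [Finset.mul_sum]; exact Finset.sum_le_sum hsum1
  have htri : (k:ℝ) * ((k:ℝ)+1) ≤ 2 * ∑ m ∈ S, (m:ℝ) := by
    have := sum_ge_triangle S (fun m hm => by
      simp only [hS, Finset.mem_filter, Finset.mem_Icc] at hm; exact hm.1.1)
    rw [← hk] at this
    have h2 := (Nat.cast_le (α := ℝ)).2 this
    push_cast at h2
    linarith
  have htotal : δ * h * n * n <
      ∑ t ∈ Finset.Icc 1 n,
        (((Finset.Icc 1 n).filter fun m => m ∉ A ∧ t < m ∧ m - t ∈ A).card : ℝ) := by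
    have hdc : (∑ m ∈ S, (countingFn A (m-1) : ℝ)) =
        ∑ t ∈ Finset.Icc 1 n,
          (((Finset.Icc 1 n).filter fun m => m ∉ A ∧ t < m ∧ m - t ∈ A).card : ℝ) := by
      exact_mod_cast congrArg (Nat.cast : ℕ → ℝ) (double_count A n)
    rw [← hdc]
    have hδh : δ * h = α/4 * ((1-α)/2)^2 := by
      rw [hδ]
      field_simp
      ring
    have hknn : (0:ℝ) ≤ (1-α)/2 * n := by nlinarith
    have hsq := mul_self_lt_mul_self hknn hk_lb
    have step1 : δ * h * n * n < α/4 * ((k:ℝ)*k) := by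
      have e : δ * (h:ℝ) * n * n = α/4*(((1-α)/2*n)*((1-α)/2*n)) := by
        rw [show δ * (h:ℝ) * n * n = (δ*h)*n*n by ring, hδh]; ring
      rw [e]
      exact mul_lt_mul_of_pos_left hsq (by linarith : (0:ℝ) < α/4)
    have step2 : α/4*((k:ℝ)*k) ≤ α/4*((k:ℝ)*((k:ℝ)+1)) := by
      have hknn2 : (0:ℝ) ≤ α/4 * k :=
        mul_nonneg (by linarith) (Nat.cast_nonneg k)
      linarith [hknn2]
    have step3 : α/4*((k:ℝ)*((k:ℝ)+1)) ≤ α/2 * ∑ m ∈ S, (m:ℝ) := by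
      linarith [mul_le_mul_of_nonneg_left htri (show (0:ℝ) ≤ α/4 by linarith)]
    linarith
  obtain ⟨t, htmem, hlt⟩ := Finset.exists_lt_of_sum_lt (f := fun _ : ℕ => δ * h * n)
    (g := fun t => (((Finset.Icc 1 n).filter fun m => m ∉ A ∧ t < m ∧ m - t ∈ A).card : ℝ))
    (by
      have hcardIcc : (Finset.Icc 1 n).card = n := by simp
      rw [Finset.sum_const, hcardIcc, nsmul_eq_mul]
      calc (n:ℝ) * (δ * h * n) = δ * h * n * n := by ring
      _ < _ := htotal)
  have hgain := gain B h hh hB A n t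
  set G := (Finset.Icc 1 n).filter fun x => x ∈ A + B ∧ x ∉ A with hG
  have hgain' : δ * h * n < (h:ℝ) * G.card := by
    calc δ * h * n < _ := hlt
    _ ≤ (h:ℝ) * G.card := by exact_mod_cast hgain
  have hGlb : δ * n < (G.card : ℝ) := by
    have hhpos : (0:ℝ) < h := by linarith
    have := (mul_lt_mul_iff_right₀ hhpos).1 (by calc (h:ℝ) * (δ * n) = δ * h * n := by ring
      _ < (h:ℝ) * G.card := hgain')
    exact this
  -- combine
  have hunion : ((Finset.Icc 1 n).filter (· ∈ A)) ∪ G ⊆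
      (Finset.Icc 1 n).filter (· ∈ A + B) := by
    intro x hx
    rcases Finset.mem_union.1 hx with hx | hx
    · simp only [Finset.mem_filter] at hx ⊢
      exact ⟨hx.1, hsub hx.2⟩
    · simp only [hG, Finset.mem_filter] at hx ⊢
      exact ⟨hx.1, hx.2.1⟩
  have hdisj : Disjoint ((Finset.Icc 1 n).filter (· ∈ A)) G := by
    rw [Finset.disjoint_left]
    intro x hx hxG
    simp only [Finset.mem_filter] at hx
    simp only [hG, Finset.mem_filter] at hxG
    exact hxG.2.2 hx.2
  have hcard : countingFn A n + G.card ≤ countingFn (A+B) n := by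
    rw [countingFn_eq A, countingFn_eq (A+B)]
    calc ((Finset.Icc 1 n).filter (· ∈ A)).card + G.card
        = (((Finset.Icc 1 n).filter (· ∈ A)) ∪ G).card :=
          (Finset.card_union_of_disjoint hdisj).symm
    _ ≤ _ := Finset.card_le_card hunion
  have hαn : α * n ≤ (countingFn A n : ℝ) := shnirelmanDensity_le_aux A hn
  have hcard' : (countingFn A n : ℝ) + G.card ≤ (countingFn (A+B) n : ℝ) := by
    exact_mod_cast hcard
  have hGlb' : δ * (n:ℝ) < (G.card : ℝ) := hGlb
  nlinarith [hαn, hGlb', hcard']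

theorem erdos_basis_essential_component (B : Set ℕ) (h : ℕ) (hh : 0 < h)
    (hB : IsBasisOfOrder B h) (A : Set ℕ)
    (h0 : 0 < shnirelmanDensity A) (h1 : shnirelmanDensity A < 1) :
    shnirelmanDensity A < shnirelmanDensity (A + B) := by
  set α := shnirelmanDensity A with hα
  set δ := α * (1 - α)^2 / (16 * (h:ℝ)) with hδ
  have hh' : (1:ℝ) ≤ h := by exact_mod_cast hh
  have hδpos : 0 < δ := by
    apply div_pos
    · exact mul_pos h0 (pow_pos (by linarith) 2)
    · nlinarith
  have hle : α + δ ≤ shnirelmanDensity (A+B) := by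
    apply le_ciInf
    rintro ⟨n, hn⟩
    have hmb := main_bound B h hh hB A h0 h1 hn
    rw [le_div_iff₀ (by exact_mod_cast hn : (0:ℝ) < n)]
    exact hmb
  linarith
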